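/- arXiv:1606.03753 — 2 statements merged into one kernel-verified Lean document; each statement's English description precedes it below -/
import Mathlib

section
/- Let G be an edge-weighted graph on K vertices and G[m] its m-fold blow-up. For any straight-line drawing of G[m], averaging over the m^K drawings of G obtained by selecting one point from each blow-up class shows cr̄(G[m]) ≥ m^4 · cr̄(G). -/
open Finset
open scoped Classical BigOperators

noncomputable section

/-- Orientation determinant of an ordered triple of planar points. -/
def orient (p q r : ℝ × ℝ) : ℝ :=
  (q.1 - p.1) * (r.2 - p.2) - (q.2 - p.2) * (r.1 - p.1)

/-- A point placement is in general position if no three distinct vertices are collinear. -/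
def GenPos {V : Type*} (f : V → ℝ × ℝ) : Prop :=
  ∀ a b c : V, a ≠ b → a ≠ c → b ≠ c → orient (f a) (f b) (f c) ≠ 0

/-- Two straight-line segments cross: their interiors meet. -/
def SegCross (p q r s : ℝ × ℝ) : Prop :=
  (openSegment ℝ p q ∩ openSegment ℝ r s).Nonempty

/-- Weighted number of crossing pairs of edges in a straight-line drawing:
each unordered crossing pair {ab, cd} is counted once (via 8 ordered tuples). -/
def crossCount {V : Type*} [Fintype V] (w : V → V → ℝ) (f : V → ℝ × ℝ) : ℝ :=
  (∑ a : V, ∑ b : V, ∑ c : V, ∑ d : V,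
      if a ≠ b ∧ a ≠ c ∧ a ≠ d ∧ b ≠ c ∧ b ≠ d ∧ c ≠ d ∧
          SegCross (f a) (f b) (f c) (f d)
        then w a b * w c d else 0) / 8

/-- Rectilinear crossing number of an edge-weighted graph. -/
def wrcr (V : Type*) [Fintype V] (w : V → V → ℝ) : ℝ :=
  sInf {x : ℝ | ∃ f : V → ℝ × ℝ, Function.Injective f ∧ GenPos f ∧ crossCount w f = x}

/-- 0/1 edge weights of a simple graph. -/
def adjW {V : Type*} (G : SimpleGraph V) : V → V → ℝ :=
  fun u v => if G.Adj u v then 1 else 0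

/-- Rectilinear crossing number of a simple graph. -/
def rcr (n : ℕ) (G : SimpleGraph (Fin n)) : ℝ := wrcr (Fin n) (adjW G)

/-- Weighted number of edges between two vertex subsets. -/
def eW {V : Type*} (w : V → V → ℝ) (S T : Finset V) : ℝ :=
  ∑ u ∈ S, ∑ v ∈ T, w u v

/-- Number of edges of a simple graph between two vertex subsets
(edges inside the intersection counted twice). -/
def eG {n : ℕ} (G : SimpleGraph (Fin n)) (S T : Finset (Fin n)) : ℝ :=
  eW (adjW G) S T

/-- The part (fiber) of a colouring. -/
def fiber {n K : ℕ} (col : Fin n → Fin K) (i : Fin K) : Finset (Fin n) :=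
  Finset.univ.filter (fun v => col v = i)

/-- A colouring is an equitable partition: any two parts differ in size by at most one. -/
def EquitableCol {n K : ℕ} (col : Fin n → Fin K) : Prop :=
  ∀ i j : Fin K, (fiber col i).card ≤ (fiber col j).card + 1

/-- All transversals of three point sets have the same orientation. -/
def SameType3 (A B C : Finset (ℝ × ℝ)) : Prop :=
  ∀ a ∈ A, ∀ b ∈ B, ∀ c ∈ C, ∀ a' ∈ A, ∀ b' ∈ B, ∀ c' ∈ C,
    Real.sign (orient a b c) = Real.sign (orient a' b' c')

/-- Four point sets have same-type transversals. -/
def SameTypeQuad (A B C D : Finset (ℝ × ℝ)) : Prop :=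
  SameType3 A B C ∧ SameType3 A B D ∧ SameType3 A C D ∧ SameType3 B C D

/-- Four points are in convex position. -/
def ConvexPos4 (a b c d : ℝ × ℝ) : Prop :=
  a ∉ convexHull ℝ ({b, c, d} : Set (ℝ × ℝ)) ∧
  b ∉ convexHull ℝ ({a, c, d} : Set (ℝ × ℝ)) ∧
  c ∉ convexHull ℝ ({a, b, d} : Set (ℝ × ℝ)) ∧
  d ∉ convexHull ℝ ({a, b, c} : Set (ℝ × ℝ))

/-!
A straight-line drawing `f` of `G[m]`, restricted to a transversal `s` (one vertex per class),
is a drawing of `G`, so its crossing count is at least `cr̄(G)`; there are `m ^ K` transversals.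
Summing over them, a crossing quadruple of `G[m]` in four distinct classes is counted by exactly
`m ^ (K - 4)` transversals and any other quadruple by none, whence
`m ^ K cr̄(G) ≤ m ^ (K - 4) · crossCount f`. To avoid the subtraction in the exponent the
counting is stated as `m ^ 4 · (sum over transversals) ≤ m ^ K · (sum over quadruples)`.
-/

open Function

theorem Fintype.card_fun_smul_sum_comp_injective {κ ι α M : Type*} [Fintype κ] [Fintype ι]
    [Fintype α] [DecidableEq κ] [DecidableEq ι] [AddCommMonoid M] {e : κ → ι}
    (he : Injective e) (G : (κ → α) → M) :
    Fintype.card (κ → α) • ∑ s : ι → α, G (s ∘ e) =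
      Fintype.card (ι → α) • ∑ t : κ → α, G t := by
  set E := Equiv.piEquivPiSubtypeProd (· ∈ Set.range e) (fun _ => α)
  set R := Equiv.ofInjective e he
  have hsplit : ∑ s : ι → α, G (s ∘ e) =
      Fintype.card ({i // i ∉ Set.range e} → α) • ∑ t : κ → α, G t := by
    have hcomp : ∀ u v, E.symm (u, v) ∘ e = fun k => u (R k) := by
      intro u v
      ext k
      simp [E, R, Equiv.piEquivPiSubtypeProd_symm_apply]
    simp only [← E.symm.sum_comp, Fintype.sum_prod_type, hcomp, Finset.sum_const,
      Finset.card_univ, ← Finset.smul_sum]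
    congr 1
    exact Fintype.sum_equiv (Equiv.arrowCongr R (Equiv.refl α)).symm _ G fun _ => rfl
  have hcard : Fintype.card (ι → α) =
      Fintype.card (κ → α) * Fintype.card ({i // i ∉ Set.range e} → α) := by
    rw [Fintype.card_congr E, Fintype.card_prod,
      Fintype.card_congr (Equiv.arrowCongr R (Equiv.refl α))]
  rw [hsplit, smul_smul, hcard]

theorem Fintype.sum_fin_four_fun {β M : Type*} [Fintype β] [AddCommMonoid M]
    (g : β → β → β → β → M) :
    ∑ q : Fin 4 → β, g (q 0) (q 1) (q 2) (q 3) = ∑ a, ∑ b, ∑ c, ∑ d, g a b c d := by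
  let E : β × β × β × β ≃ (Fin 4 → β) :=
    { toFun x := ![x.1, x.2.1, x.2.2.1, x.2.2.2]
      invFun q := (q 0, q 1, q 2, q 3)
      left_inv _ := rfl
      right_inv q := by ext i; fin_cases i <;> rfl }
  simp only [← E.sum_comp, Fintype.sum_prod_type]
  rfl

theorem Fin.injective_four_iff {β : Type*} {q : Fin 4 → β} :
    Injective q ↔
      q 0 ≠ q 1 ∧ q 0 ≠ q 2 ∧ q 0 ≠ q 3 ∧ q 1 ≠ q 2 ∧ q 1 ≠ q 3 ∧ q 2 ≠ q 3 := by
  refine ⟨fun h => ⟨h.ne (by decide), h.ne (by decide), h.ne (by decide), h.ne (by decide),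
    h.ne (by decide), h.ne (by decide)⟩, fun h a b hab => ?_⟩
  fin_cases a <;> fin_cases b <;> simp_all [eq_comm]

def transversal {ι α : Type*} (s : ι → α) : ι → ι × α := fun i => (i, s i)

theorem transversal_injective {ι α : Type*} (s : ι → α) : Injective (transversal s) :=
  fun _ _ h => congrArg Prod.fst h

theorem card_fun_smul_sum_transversal_le {κ ι α M : Type*} [Fintype κ] [Fintype ι] [Fintype α]
    [DecidableEq κ] [DecidableEq ι] [AddCommMonoid M] [PartialOrder M] [IsOrderedAddMonoid M]
    (F : (κ → ι × α) → M) (hF_nonneg : ∀ q, 0 ≤ F q)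
    (hF : ∀ q, ¬Injective q → F q = 0) :
    Fintype.card (κ → α) • ∑ s : ι → α, ∑ e : κ → ι, F (transversal s ∘ e) ≤
      Fintype.card (ι → α) • ∑ q, F q := by
  rw [Finset.sum_comm,
    ← (Equiv.arrowProdEquivProdArrow κ (fun _ => ι) (fun _ => α)).symm.sum_comp,
    Fintype.sum_prod_type, Finset.smul_sum, Finset.smul_sum]
  refine Finset.sum_le_sum fun e _ => ?_
  by_cases he : Injective e
  · exact (Fintype.card_fun_smul_sum_comp_injective he
      fun t => F fun n => (e n, t n)).le
  · -- equal classes give equal vertices, so nothing is counted here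
    have hzero : ∀ s : ι → α, F (transversal s ∘ e) = 0 := fun s =>
      hF _ fun h => he ((transversal_injective s).of_comp_iff e |>.mp h)
    simp only [hzero, Finset.sum_const_zero, smul_zero]
    exact nsmul_nonneg (Finset.sum_nonneg fun q _ => hF_nonneg _) _

theorem orient_moment_curve (a b c : ℝ) :
    orient (a, a ^ 2) (b, b ^ 2) (c, c ^ 2) = (b - a) * (c - a) * (c - b) := by
  simp only [orient]
  ring

theorem exists_injective_genPos (V : Type*) [Countable V] :
    ∃ f : V → ℝ × ℝ, Injective f ∧ GenPos f := by
  obtain ⟨e, he⟩ := Countable.exists_injective_nat V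
  have hx : Injective fun v => (e v : ℝ) := Nat.cast_injective.comp he
  refine ⟨fun v => ((e v : ℝ), (e v : ℝ) ^ 2), fun a b h => hx (congrArg Prod.fst h), ?_⟩
  intro a b c hab hac hbc
  rw [orient_moment_curve]
  exact mul_ne_zero (mul_ne_zero (sub_ne_zero.2 (hx.ne hab).symm) (sub_ne_zero.2 (hx.ne hac).symm))
    (sub_ne_zero.2 (hx.ne hbc).symm)

theorem GenPos.comp {V W : Type*} {f : V → ℝ × ℝ} (hf : GenPos f) {g : W → V}
    (hg : Injective g) : GenPos (f ∘ g) :=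
  fun _ _ _ hab hac hbc => hf _ _ _ (hg.ne hab) (hg.ne hac) (hg.ne hbc)

section CrossTerm

variable {V : Type*} (w : V → V → ℝ) (f : V → ℝ × ℝ)

def crossTerm (q : Fin 4 → V) : ℝ :=
  if Injective q ∧ SegCross (f (q 0)) (f (q 1)) (f (q 2)) (f (q 3))
    then w (q 0) (q 1) * w (q 2) (q 3) else 0

theorem crossCount_eq_sum_crossTerm [Fintype V] :
    crossCount w f = (∑ q, crossTerm w f q) / 8 := by
  rw [crossCount, ← Fintype.sum_fin_four_fun]
  simp only [crossTerm, Fin.injective_four_iff, and_assoc]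

variable {w}

theorem crossTerm_nonneg (hw : ∀ a b, 0 ≤ w a b) (q : Fin 4 → V) : 0 ≤ crossTerm w f q := by
  unfold crossTerm
  split_ifs
  exacts [mul_nonneg (hw _ _) (hw _ _), le_rfl]

theorem crossTerm_of_not_injective {q : Fin 4 → V} (hq : ¬Injective q) : crossTerm w f q = 0 :=
  if_neg fun h => hq h.1

theorem crossTerm_comp {W : Type*} {g : W → V} (hg : Injective g) (q : Fin 4 → W) :
    crossTerm (fun a b => w (g a) (g b)) (f ∘ g) q = crossTerm w f (g ∘ q) := by
  simp only [crossTerm, hg.of_comp_iff, Function.comp_apply]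

theorem crossCount_nonneg [Fintype V] (hw : ∀ a b, 0 ≤ w a b) : 0 ≤ crossCount w f := by
  rw [crossCount_eq_sum_crossTerm]
  exact div_nonneg (Finset.sum_nonneg fun q _ => crossTerm_nonneg f hw q) (by norm_num)

end CrossTerm

section Wrcr

variable {V : Type*} [Fintype V] {w : V → V → ℝ}

theorem wrcr_nonneg (hw : ∀ a b, 0 ≤ w a b) : 0 ≤ wrcr V w :=
  Real.sInf_nonneg <| by
    rintro _ ⟨f, -, -, rfl⟩
    exact crossCount_nonneg f hw

theorem wrcr_le_crossCount (hw : ∀ a b, 0 ≤ w a b) {f : V → ℝ × ℝ} (hf : Injective f)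
    (hgen : GenPos f) : wrcr V w ≤ crossCount w f := by
  refine csInf_le ⟨0, ?_⟩ ⟨f, hf, hgen, rfl⟩
  rintro _ ⟨g, -, -, rfl⟩
  exact crossCount_nonneg g hw

end Wrcr

theorem card_pow_four_mul_wrcr_le_crossCount_blowUp {ι α : Type*} [Fintype ι] [Fintype α]
    [Nonempty α] [DecidableEq ι] {w : ι → ι → ℝ} (hw : ∀ i j, 0 ≤ w i j)
    {f : ι × α → ℝ × ℝ} (hf : Injective f) (hgen : GenPos f) :
    (Fintype.card α : ℝ) ^ 4 * wrcr ι w ≤ crossCount (fun u v => w u.1 v.1) f := by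
  set W : ι × α → ι × α → ℝ := fun u v => w u.1 v.1
  have hpos : (0 : ℝ) < (Fintype.card α : ℝ) ^ Fintype.card ι := by
    have := Fintype.card_pos (α := α)
    positivity
  refine le_of_mul_le_mul_left ?_ hpos
  calc (Fintype.card α : ℝ) ^ Fintype.card ι * ((Fintype.card α : ℝ) ^ 4 * wrcr ι w)
      = (Fintype.card α : ℝ) ^ 4 * ∑ _s : ι → α, wrcr ι w := by
        simp only [Finset.sum_const, Finset.card_univ, Fintype.card_fun, nsmul_eq_mul,
          Nat.cast_pow]
        ring
    _ ≤ (Fintype.card α : ℝ) ^ 4 * ∑ s : ι → α, crossCount w (f ∘ transversal s) := by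
        gcongr with s
        exact wrcr_le_crossCount hw (hf.comp (transversal_injective s))
          (hgen.comp (transversal_injective s))
    _ = (Fintype.card α : ℝ) ^ 4 *
          (∑ s : ι → α, ∑ e, crossTerm W f (transversal s ∘ e)) / 8 := by
        simp only [crossCount_eq_sum_crossTerm, ← Finset.sum_div, mul_div_assoc,
          ← crossTerm_comp f (transversal_injective _)]
        rfl
    _ ≤ (Fintype.card α : ℝ) ^ Fintype.card ι * (∑ q, crossTerm W f q) / 8 := by
        refine div_le_div_of_nonneg_right ?_ (by norm_num)
        simpa only [nsmul_eq_mul, Fintype.card_fun, Fintype.card_fin, Nat.cast_pow] using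
          card_fun_smul_sum_transversal_le (crossTerm W f)
            (crossTerm_nonneg f fun u v => hw u.1 v.1) fun q => crossTerm_of_not_injective f
    _ = (Fintype.card α : ℝ) ^ Fintype.card ι * crossCount W f := by
        rw [crossCount_eq_sum_crossTerm, mul_div_assoc]

theorem stmt_10_general (K m : ℕ) (w : Fin K → Fin K → ℝ)
    (hw : ∀ i j, 0 ≤ w i j ∧ w i j ≤ 1) :
    (m : ℝ) ^ 4 * wrcr (Fin K) w ≤ wrcr (Fin K × Fin m) (fun u v => w u.1 v.1) := by
  have hw₀ : ∀ i j, 0 ≤ w i j := fun i j => (hw i j).1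
  rcases m.eq_zero_or_pos with rfl | hm
  · simpa using wrcr_nonneg (V := Fin K × Fin 0) fun u v => hw₀ u.1 v.1
  have : Nonempty (Fin m) := Fin.pos_iff_nonempty.1 hm
  obtain ⟨f₀, hf₀, hgen₀⟩ := exists_injective_genPos (Fin K × Fin m)
  refine le_csInf ⟨_, f₀, hf₀, hgen₀, rfl⟩ ?_
  rintro _ ⟨f, hf, hgen, rfl⟩
  simpa only [Fintype.card_fin] using card_pow_four_mul_wrcr_le_crossCount_blowUp hw₀ hf hgen

/-- Averaging over selections of one vertex per blow-up class gives
`cr̄(G[m]) ≥ m^4 cr̄(G)`. -/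
theorem stmt_10 (K m : ℕ) (w : Fin K → Fin K → ℝ)
    (hsymm : ∀ i j, w i j = w j i) (hdiag : ∀ i, w i i = 0)
    (hw : ∀ i j, 0 ≤ w i j ∧ w i j ≤ 1) :
    (m : ℝ) ^ 4 * wrcr (Fin K) w ≤ wrcr (Fin K × Fin m) (fun u v => w u.1 v.1) :=
  stmt_10_general K m w hw
end
end

section
/- In any straight-line drawing of a graph on n points in general position obtained by placing the vertices of each part V_i of an equitable K-partition inside pairwise far-apart tiny disks (so every quadruple of parts has same-type transversals), the number of crossing pairs of edges is at most (n/K)^4 · cr̄(H) + n^4/(2K), where H is the quotient drawing with one vertex per disk realizing cr̄ of the complete weighted quotient graph. -/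
open Finset
open scoped Classical BigOperators

noncomputable section

/-! Split the ordered quadruples `(a, b, c, d)` counted by `crossCount` according to whether
`a, b, c, d` lie in four different parts. Those that do cross exactly when the corresponding
points of `u` do, so aggregating the weights part by part gives `8 · crossCount` of the quotient
weights `eW (V i) (V j) = (n/K)² · wq i j`. Otherwise two of the four vertices share a part. Of the
pairings `{ab, cd}` and `{ac, bd}` of four points in general position at most one crosses, so
these quadruples number at most `4 n²` times the number of ordered pairs of distinct vertices in a
common part, which is at most `n² / K` for an equitable partition. -/

lemma orient_rotate (p q r : ℝ × ℝ) : orient q r p = orient p q r := by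
  unfold orient; ring

lemma orient_swap (p q r : ℝ × ℝ) : orient p r q = -orient p q r := by
  unfold orient; ring

lemma orient_cocycle (p q r s : ℝ × ℝ) :
    orient q r s = orient p q r - orient p q s + orient p r s := by
  unfold orient; ring

lemma orient_add_smul {a b : ℝ} (hab : a + b = 1) (p q r s : ℝ × ℝ) :
    orient p q (a • r + b • s) = a * orient p q r + b * orient p q s := by
  obtain rfl : b = 1 - a := by linarith
  simp only [orient, Prod.fst_add, Prod.snd_add, Prod.smul_fst, Prod.smul_snd, smul_eq_mul]
  ring

lemma orient_eq_zero_of_mem_openSegment {p q x : ℝ × ℝ} (hx : x ∈ openSegment ℝ p q) :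
    orient p q x = 0 := by
  obtain ⟨a, b, -, -, hab, rfl⟩ := hx
  rw [orient_add_smul hab]
  simp only [orient]
  ring

lemma SegCross.symm {p q r s : ℝ × ℝ} (h : SegCross p q r s) : SegCross r s p q := by
  unfold SegCross at *
  rwa [Set.inter_comm]

lemma SegCross.orient_mul_nonpos {p q r s : ℝ × ℝ} (h : SegCross p q r s) :
    orient p q r * orient p q s ≤ 0 := by
  obtain ⟨x, hx, a, b, ha, hb, hab, rfl⟩ := h
  have h0 := orient_eq_zero_of_mem_openSegment hx
  rw [orient_add_smul hab] at h0
  have key : a * (orient p q r * orient p q s) = -(b * orient p q s ^ 2) := by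
    linear_combination orient p q s * h0
  have : a * (orient p q r * orient p q s) ≤ 0 := by
    rw [key, neg_nonpos]; positivity
  exact nonpos_of_mul_nonpos_right this ha

lemma SegCross.orient_mul_neg {p q r s : ℝ × ℝ} (h : SegCross p q r s)
    (hr : orient p q r ≠ 0) (hs : orient p q s ≠ 0) : orient p q r * orient p q s < 0 :=
  h.orient_mul_nonpos.lt_of_ne (mul_ne_zero hr hs)

lemma SegCross.not_segCross {p q r s : ℝ × ℝ} (hpqr : orient p q r ≠ 0)
    (hpqs : orient p q s ≠ 0) (hprs : orient p r s ≠ 0) (hqrs : orient q r s ≠ 0)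
    (h : SegCross p q r s) : ¬ SegCross p r q s := by
  intro h'
  have hAB := h.orient_mul_neg hpqr hpqs
  have hCD := h.symm.orient_mul_neg (by rwa [orient_rotate]) (by rwa [orient_rotate])
  have hAC := h'.orient_mul_neg (by rwa [orient_swap, neg_ne_zero]) hprs
  have hBD := h'.symm.orient_mul_neg (by rwa [orient_rotate])
    (by rwa [orient_swap, neg_ne_zero])
  rw [orient_rotate p r s, orient_rotate q r s] at hCD
  rw [orient_swap p q r] at hAC
  rw [orient_rotate p q s, orient_swap q r s] at hBD
  have hid := orient_cocycle p q r s
  rcases hpqr.lt_or_gt with hA | hA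
  · have hB : 0 < orient p q s := by nlinarith
    have hC : orient p r s < 0 := by nlinarith
    have hD : 0 < orient q r s := by nlinarith
    linarith
  · have hB : orient p q s < 0 := by nlinarith
    have hC : 0 < orient p r s := by nlinarith
    have hD : orient q r s < 0 := by nlinarith
    linarith

def Distinct4 {α : Type*} (a b c d : α) : Prop :=
  a ≠ b ∧ a ≠ c ∧ a ≠ d ∧ b ≠ c ∧ b ≠ d ∧ c ≠ d

lemma Distinct4.of_comp {α β : Type*} {g : α → β} {a b c d : α}
    (h : Distinct4 (g a) (g b) (g c) (g d)) : Distinct4 a b c d := by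
  obtain ⟨h1, h2, h3, h4, h5, h6⟩ := h
  exact ⟨ne_of_apply_ne g h1, ne_of_apply_ne g h2, ne_of_apply_ne g h3,
    ne_of_apply_ne g h4, ne_of_apply_ne g h5, ne_of_apply_ne g h6⟩

def EdgesCross {V : Type*} (f : V → ℝ × ℝ) (a b c d : V) : Prop :=
  Distinct4 a b c d ∧ SegCross (f a) (f b) (f c) (f d)

lemma EdgesCross.not_edgesCross {V : Type*} {f : V → ℝ × ℝ} (hf : GenPos f) {a b c d : V}
    (h : EdgesCross f a b c d) : ¬ EdgesCross f a c b d := by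
  obtain ⟨⟨hab, hac, had, hbc, hbd, hcd⟩, hs⟩ := h
  exact fun h' => hs.not_segCross (hf a b c hab hac hbc) (hf a b d hab had hbd)
    (hf a c d hac had hcd) (hf b c d hbc hbd hcd) h'.2

lemma crossCount_eq {V : Type*} [Fintype V] (w : V → V → ℝ) (f : V → ℝ × ℝ) :
    crossCount w f =
      (∑ a, ∑ b, ∑ c, ∑ d, if EdgesCross f a b c d then w a b * w c d else 0) / 8 := by
  simp only [crossCount, EdgesCross, Distinct4, and_assoc]

lemma crossCount_eq_mul {V : Type*} [Fintype V] {v w : V → V → ℝ} {c : ℝ}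
    (h : ∀ i j, i ≠ j → v i j = c * w i j) (f : V → ℝ × ℝ) :
    crossCount v f = c ^ 2 * crossCount w f := by
  simp only [crossCount_eq, Finset.mul_sum, mul_div_assoc']
  congr 1
  refine Finset.sum_congr rfl fun a _ => Finset.sum_congr rfl fun b _ =>
    Finset.sum_congr rfl fun c' _ => Finset.sum_congr rfl fun d _ => ?_
  split_ifs with hx
  · rw [h a b hx.1.1, h c' d hx.1.2.2.2.2.2]; ring
  · simp

lemma crossCount_mul_eight_eq_add {V : Type*} [Fintype V] (w : V → V → ℝ) (f : V → ℝ × ℝ)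
    (P : V → V → V → V → Prop) :
    crossCount w f * 8 =
      (∑ a, ∑ b, ∑ c, ∑ d, if EdgesCross f a b c d ∧ P a b c d then w a b * w c d else 0) +
      ∑ a, ∑ b, ∑ c, ∑ d, if EdgesCross f a b c d ∧ ¬ P a b c d then w a b * w c d else 0 := by
  rw [crossCount_eq, div_mul_cancel₀ _ (by norm_num : (8 : ℝ) ≠ 0)]
  simp only [← Finset.sum_add_distrib]
  refine Finset.sum_congr rfl fun a _ => Finset.sum_congr rfl fun b _ =>
    Finset.sum_congr rfl fun c _ => Finset.sum_congr rfl fun d _ => ?_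
  by_cases hP : P a b c d <;> simp [hP]

section Partition

variable {n K : ℕ} (col : Fin n → Fin K)

lemma sum_comp_eq_sum_fiber (h : Fin K → Fin n → ℝ) :
    ∑ a, h (col a) a = ∑ i, ∑ a ∈ fiber col i, h i a := by
  rw [← Finset.sum_fiberwise Finset.univ col (fun a => h (col a) a)]
  exact Finset.sum_congr rfl fun i _ => Finset.sum_congr rfl fun a ha => by
    rw [(Finset.mem_filter.mp ha).2]

lemma sum_sum_mul_comp_eq (g : Fin n → Fin n → ℝ) (F : Fin K → Fin K → ℝ) :
    ∑ a, ∑ b, g a b * F (col a) (col b) =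
      ∑ i, ∑ j, eW g (fiber col i) (fiber col j) * F i j := by
  simp only [eW, Finset.sum_mul]
  rw [sum_comp_eq_sum_fiber col (fun i a => ∑ b, g a b * F i (col b))]
  refine Finset.sum_congr rfl fun i _ => ?_
  exact (Finset.sum_congr rfl fun a _ =>
    sum_comp_eq_sum_fiber col (fun j b => g a b * F i j)).trans Finset.sum_comm

lemma sum4_mul_comp_eq (w : Fin n → Fin n → ℝ) (F : Fin K → Fin K → Fin K → Fin K → ℝ) :
    ∑ a, ∑ b, ∑ c, ∑ d, w a b * w c d * F (col a) (col b) (col c) (col d) =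
      ∑ i, ∑ j, ∑ k, ∑ l,
        eW w (fiber col i) (fiber col j) * eW w (fiber col k) (fiber col l) * F i j k l := by
  simp only [mul_assoc, ← Finset.mul_sum]
  calc ∑ a, ∑ b, w a b * ∑ c, ∑ d, w c d * F (col a) (col b) (col c) (col d)
      = ∑ a, ∑ b, w a b * ∑ k, ∑ l,
          eW w (fiber col k) (fiber col l) * F (col a) (col b) k l :=
        Finset.sum_congr rfl fun a _ => Finset.sum_congr rfl fun b _ => by
          rw [sum_sum_mul_comp_eq col w (F (col a) (col b))]
    _ = _ := sum_sum_mul_comp_eq col w fun i j => ∑ k, ∑ l,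
          eW w (fiber col k) (fiber col l) * F i j k l

lemma sum_rainbow_edgesCross_eq (w : Fin n → Fin n → ℝ) (f : Fin n → ℝ × ℝ)
    (u : Fin K → ℝ × ℝ)
    (hsame : ∀ a b c d, Distinct4 (col a) (col b) (col c) (col d) →
      (SegCross (f a) (f b) (f c) (f d) ↔
        SegCross (u (col a)) (u (col b)) (u (col c)) (u (col d)))) :
    ∑ a, ∑ b, ∑ c, ∑ d,
        (if EdgesCross f a b c d ∧ Distinct4 (col a) (col b) (col c) (col d)
          then w a b * w c d else 0) =
      8 * crossCount (fun i j => eW w (fiber col i) (fiber col j)) u := by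
  have hcross : ∀ a b c d, EdgesCross f a b c d ∧ Distinct4 (col a) (col b) (col c) (col d) ↔
      EdgesCross u (col a) (col b) (col c) (col d) := fun a b c d =>
    ⟨fun ⟨⟨_, hs⟩, hd⟩ => ⟨hd, (hsame a b c d hd).1 hs⟩,
      fun ⟨hd, hs⟩ => ⟨⟨hd.of_comp, (hsame a b c d hd).2 hs⟩, hd⟩⟩
  have := sum4_mul_comp_eq col w fun i j k l => if EdgesCross u i j k l then 1 else 0
  simp only [mul_boole, ← hcross] at this
  rw [this, crossCount_eq, mul_div_cancel₀ _ (by norm_num : (8 : ℝ) ≠ 0)]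

def samePart (x y : Fin n) : ℝ :=
  if x ≠ y ∧ col x = col y then 1 else 0

lemma samePart_nonneg (x y : Fin n) : 0 ≤ samePart col x y := by
  unfold samePart; split_ifs <;> norm_num

lemma samePart_eq_one {x y : Fin n} (hxy : x ≠ y) (h : col x = col y) :
    samePart col x y = 1 :=
  if_pos ⟨hxy, h⟩

lemma one_le_sum_samePart {a b c d : Fin n} (hd : Distinct4 a b c d)
    (hc : ¬ Distinct4 (col a) (col b) (col c) (col d)) :
    1 ≤ samePart col a b + samePart col c d + samePart col a c + samePart col b d +
      samePart col a d + samePart col b c := by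
  obtain ⟨hab, hac, had, hbc, hbd, hcd⟩ := hd
  have := samePart_nonneg col
  simp only [Distinct4, not_and_or, not_not] at hc
  rcases hc with h | h | h | h | h | h
  · linarith [samePart_eq_one col hab h, this c d, this a c, this b d, this a d, this b c]
  · linarith [samePart_eq_one col hac h, this a b, this c d, this b d, this a d, this b c]
  · linarith [samePart_eq_one col had h, this a b, this c d, this a c, this b d, this b c]
  · linarith [samePart_eq_one col hbc h, this a b, this c d, this a c, this b d, this a d]
  · linarith [samePart_eq_one col hbd h, this a b, this c d, this a c, this a d, this b c]
  · linarith [samePart_eq_one col hcd h, this a b, this a c, this b d, this a d, this b c]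

lemma card_fiber_mul_le (hcol : EquitableCol col) (i : Fin K) :
    K * (fiber col i).card ≤ n + K := by
  have hsum : ∑ j, (fiber col j).card = n := by
    simpa [fiber] using (Finset.card_eq_sum_card_fiberwise (s := Finset.univ) (t := Finset.univ)
      (f := col) fun x _ => Finset.mem_univ _).symm
  calc K * (fiber col i).card = ∑ _j : Fin K, (fiber col i).card := by simp
    _ ≤ ∑ j, ((fiber col j).card + 1) := Finset.sum_le_sum fun j _ => hcol i j
    _ = n + K := by simp [Finset.sum_add_distrib, hsum]

lemma sum_samePart (x : Fin n) :
    ∑ y, samePart col x y = ((fiber col (col x)).card : ℝ) - 1 := by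
  have hfilter : Finset.univ.filter (fun y => x ≠ y ∧ col x = col y) =
      (fiber col (col x)).erase x := by
    ext y; simp [fiber, eq_comm, and_comm]
  have hx : x ∈ fiber col (col x) := by simp [fiber]
  simp only [samePart, Finset.sum_boole, hfilter, Finset.card_erase_of_mem hx]
  rw [Nat.cast_sub (Finset.card_pos.mpr ⟨x, hx⟩), Nat.cast_one]

lemma mul_sum_sum_samePart_le (hcol : EquitableCol col) :
    K * ∑ x, ∑ y, samePart col x y ≤ n ^ 2 := by
  have hx : ∀ x, (K : ℝ) * ∑ y, samePart col x y ≤ n := fun x => by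
    have hcard : (K : ℝ) * (fiber col (col x)).card ≤ n + K := by
      exact_mod_cast card_fiber_mul_le col hcol (col x)
    rw [sum_samePart]
    linarith
  calc (K : ℝ) * ∑ x, ∑ y, samePart col x y ≤ ∑ _x : Fin n, (n : ℝ) := by
        rw [Finset.mul_sum]; exact Finset.sum_le_sum fun x _ => hx x
    _ = n ^ 2 := by simp [sq]

lemma sum_bad_edgesCross_le {f : Fin n → ℝ × ℝ} (hf : GenPos f) {w : Fin n → Fin n → ℝ}
    (hw₀ : ∀ a b, 0 ≤ w a b) (hw₁ : ∀ a b, w a b ≤ 1) :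
    ∑ a, ∑ b, ∑ c, ∑ d,
        (if EdgesCross f a b c d ∧ ¬ Distinct4 (col a) (col b) (col c) (col d)
          then w a b * w c d else 0) ≤
      4 * n ^ 2 * ∑ x, ∑ y, samePart col x y := by
  set s := samePart col
  set χ : Fin n → Fin n → Fin n → Fin n → ℝ := fun a b c d =>
    if EdgesCross f a b c d then 1 else 0
  have hχ₀ : ∀ a b c d, 0 ≤ χ a b c d := fun a b c d => by
    simp only [χ]; split_ifs <;> norm_num
  have hs₀ := samePart_nonneg col
  calc _ ≤ ∑ a, ∑ b, ∑ c, ∑ d, χ a b c d *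
          (s a b + s c d + s a c + s b d + s a d + s b c) := by
        gcongr with a _ b _ c _ d _
        split_ifs with h
        · have hχ : χ a b c d = 1 := if_pos h.1
          rw [hχ, one_mul]
          nlinarith [one_le_sum_samePart col h.1.1 h.2, hw₀ a b, hw₁ a b, hw₀ c d, hw₁ c d]
        · refine mul_nonneg (hχ₀ a b c d) ?_
          linarith [hs₀ a b, hs₀ c d, hs₀ a c, hs₀ b d, hs₀ a d, hs₀ b c]
    _ = ∑ a, ∑ b, ∑ c, ∑ d, (χ a b c d * (s a b + s c d) + χ a b c d * (s a c + s b d)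
          + χ a b c d * (s a d + s b c)) := by
        simp only [mul_add, add_assoc]
    _ = ∑ a, ∑ b, ∑ c, ∑ d, ((χ a b c d + χ a c b d) * (s a b + s c d)
          + χ a b c d * (s a d + s b c)) := by
        have hswap : ∑ a, ∑ b, ∑ c, ∑ d, χ a b c d * (s a c + s b d) =
            ∑ a, ∑ b, ∑ c, ∑ d, χ a c b d * (s a b + s c d) :=
          Finset.sum_congr rfl fun a _ => Finset.sum_comm
        simp only [Finset.sum_add_distrib, add_mul, hswap]
    _ ≤ ∑ a, ∑ b, ∑ c, ∑ d, (s a b + s c d + (s a d + s b c)) := by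
        gcongr with a _ b _ c _ d _
        · refine mul_le_of_le_one_left (add_nonneg (hs₀ a b) (hs₀ c d)) ?_
          simp only [χ]
          split_ifs with h h'
          exacts [absurd h' (h.not_edgesCross hf), by norm_num, by norm_num, by norm_num]
        · refine mul_le_of_le_one_left (add_nonneg (hs₀ a d) (hs₀ b c)) ?_
          simp only [χ]
          split_ifs <;> norm_num
    _ = 4 * n ^ 2 * ∑ x, ∑ y, s x y := by
        simp only [Finset.sum_add_distrib, Finset.sum_const, Finset.card_univ, Fintype.card_fin,
          nsmul_eq_mul, ← Finset.mul_sum]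
        ring

end Partition

theorem stmt_13_general (n K : ℕ) (hK : 0 < K) (hn : 0 < n) (G : SimpleGraph (Fin n))
    (col : Fin n → Fin K) (hcol : EquitableCol col)
    (wq : Fin K → Fin K → ℝ)
    (hwq : ∀ i j, wq i j = if i = j then 0 else
      eG G (fiber col i) (fiber col j) / ((n : ℝ) / K) ^ 2)
    (u : Fin K → ℝ × ℝ)
    (hopt : crossCount wq u = wrcr (Fin K) wq)
    (f : Fin n → ℝ × ℝ) (hfgp : GenPos f)
    (hsame : ∀ a b c d : Fin n,
      col a ≠ col b → col a ≠ col c → col a ≠ col d →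
      col b ≠ col c → col b ≠ col d → col c ≠ col d →
        (SegCross (f a) (f b) (f c) (f d) ↔
          SegCross (u (col a)) (u (col b)) (u (col c)) (u (col d)))) :
    crossCount (adjW G) f
      ≤ ((n : ℝ) / K) ^ 4 * wrcr (Fin K) wq + (n : ℝ) ^ 4 / (2 * K) := by
  have hK' : (0 : ℝ) < K := by exact_mod_cast hK
  have hquot : ∀ i j, i ≠ j →
      eW (adjW G) (fiber col i) (fiber col j) = ((n : ℝ) / K) ^ 2 * wq i j := fun i j hij => by
    have : (n : ℝ) / K ≠ 0 := by positivity
    rw [hwq, if_neg hij, mul_div_cancel₀ _ (pow_ne_zero 2 this)]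
    rfl
  have hgood := sum_rainbow_edgesCross_eq col (adjW G) f u fun a b c d h =>
    hsame a b c d h.1 h.2.1 h.2.2.1 h.2.2.2.1 h.2.2.2.2.1 h.2.2.2.2.2
  rw [crossCount_eq_mul hquot, hopt] at hgood
  have hbad := sum_bad_edgesCross_le col hfgp (w := adjW G)
    (fun a b => by unfold adjW; split_ifs <;> norm_num)
    (fun a b => by unfold adjW; split_ifs <;> norm_num)
  have hpairs : (n : ℝ) ^ 2 * ∑ x, ∑ y, samePart col x y ≤ n ^ 4 / K := by
    rw [le_div_iff₀ hK']
    nlinarith [mul_sum_sum_samePart_le col hcol]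
  have hsplit := crossCount_mul_eight_eq_add (adjW G) f
    fun a b c d => Distinct4 (col a) (col b) (col c) (col d)
  rw [hgood] at hsplit
  linear_combination hsplit / 8 + hbad / 8 + hpairs / 2

/-- In the clustered drawing of `G` (vertices of each part placed in tiny far-apart disks
around an optimal drawing `u` of the weighted quotient graph, so that crossings between
four distinct parts match those of `u`), the number of crossing pairs is at most
`(n/K)^4 cr̄(H) + n^4/(2K)`, where `H` is the quotient drawing. -/
theorem stmt_13 (n K : ℕ) (hK : 0 < K) (hn : 0 < n) (G : SimpleGraph (Fin n))
    (col : Fin n → Fin K) (hcol : EquitableCol col)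
    (wq : Fin K → Fin K → ℝ)
    (hwq : ∀ i j, wq i j = if i = j then 0 else
      eG G (fiber col i) (fiber col j) / ((n : ℝ) / K) ^ 2)
    (u : Fin K → ℝ × ℝ) (huinj : Function.Injective u) (hugp : GenPos u)
    (hopt : crossCount wq u = wrcr (Fin K) wq)
    (f : Fin n → ℝ × ℝ) (hfinj : Function.Injective f) (hfgp : GenPos f)
    (hsame : ∀ a b c d : Fin n,
      col a ≠ col b → col a ≠ col c → col a ≠ col d →
      col b ≠ col c → col b ≠ col d → col c ≠ col d →
        (SegCross (f a) (f b) (f c) (f d) ↔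
          SegCross (u (col a)) (u (col b)) (u (col c)) (u (col d)))) :
    crossCount (adjW G) f
      ≤ ((n : ℝ) / K) ^ 4 * wrcr (Fin K) wq + (n : ℝ) ^ 4 / (2 * K) :=
  stmt_13_general n K hK hn G col hcol wq hwq u hopt f hfgp hsame
end
end
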